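/- arXiv:1809.05566 — 2 statements merged into one kernel-verified Lean document; each statement's English description precedes it below -/
import Mathlib

section
/- Let X be a metric space, R a correspondence between metric spaces X and Y, and suppose x₀ R y₀, x₁ R y₁, ..., xₙ R yₙ with consecutive points satisfying d(xᵢ, xᵢ₋₁) ≤ r for some r > 0. Then for any base points p R q, min over i of the Gromov products g_q(yᵢ, yᵢ₋₁) ≥ (min over i of d(p, xᵢ)) − r/2 − 2·dis(R). (Equivalently in the geodesic setting: m_p(x,x') ≥ min_i d(p,xᵢ) − r/2, where m_p is the maximin quantity below.) -/
open scoped ENNReal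

/-- A correspondence between `X` and `Y`. -/
def IsCorrespondence {X Y : Type*} (R : Set (X × Y)) : Prop :=
  (∀ x : X, ∃ y : Y, (x, y) ∈ R) ∧ (∀ y : Y, ∃ x : X, (x, y) ∈ R)

/-- Distortion of a correspondence. -/
noncomputable def corrDis {X Y : Type*} [MetricSpace X] [MetricSpace Y]
    (R : Set (X × Y)) : ℝ≥0∞ :=
  ⨆ a ∈ R, ⨆ b ∈ R,
    max (edist a.1 b.1 - edist a.2 b.2) (edist a.2 b.2 - edist a.1 b.1)

/-- The Gromov product `g_p(x,x') = (d(p,x) + d(p,x') - d(x,x'))/2`. -/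
noncomputable def gromovProd {X : Type*} [MetricSpace X] (p x x' : X) : ℝ :=
  (dist p x + dist p x' - dist x x') / 2

lemma corrDis_bound {X Y : Type*} [MetricSpace X] [MetricSpace Y]
    (R : Set (X × Y)) (hD : corrDis R ≠ ⊤) {a b : X × Y} (ha : a ∈ R) (hb : b ∈ R) :
    dist a.1 b.1 ≤ dist a.2 b.2 + (corrDis R).toReal ∧
      dist a.2 b.2 ≤ dist a.1 b.1 + (corrDis R).toReal := by
  have hle : max (edist a.1 b.1 - edist a.2 b.2) (edist a.2 b.2 - edist a.1 b.1)
      ≤ corrDis R := by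
    have h1 := le_iSup₂ (f := fun (a : X × Y) (_ : a ∈ R) => ⨆ b ∈ R,
        max (edist a.1 b.1 - edist a.2 b.2) (edist a.2 b.2 - edist a.1 b.1)) a ha
    refine le_trans ?_ h1
    exact le_iSup₂ (f := fun (b : X × Y) (_ : b ∈ R) =>
        max (edist a.1 b.1 - edist a.2 b.2) (edist a.2 b.2 - edist a.1 b.1)) b hb
  have h1 : edist a.1 b.1 - edist a.2 b.2 ≤ corrDis R := (max_le_iff.mp hle).1
  have h2 : edist a.2 b.2 - edist a.1 b.1 ≤ corrDis R := (max_le_iff.mp hle).2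
  rw [tsub_le_iff_right] at h1 h2
  constructor
  · have := ENNReal.toReal_mono (ENNReal.add_ne_top.mpr ⟨hD, edist_ne_top _ _⟩) h1
    rwa [ENNReal.toReal_add hD (edist_ne_top _ _), ← dist_edist, ← dist_edist,
      add_comm] at this
  · have := ENNReal.toReal_mono (ENNReal.add_ne_top.mpr ⟨hD, edist_ne_top _ _⟩) h2
    rwa [ENNReal.toReal_add hD (edist_ne_top _ _), ← dist_edist, ← dist_edist,
      add_comm] at this

/-- for a chain `x₀,…,xₙ` with consecutive distances `≤ r` related under a
correspondence `R` to `y₀,…,yₙ`, and base points `p R q`,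
`min_i g_q(yᵢ₋₁,yᵢ) ≥ (min_i d(p,xᵢ)) − r/2 − 2·dis(R)`
(stated additively in `ℝ≥0∞` since the distortion is `ℝ≥0∞`-valued). -/
theorem min_gromovProd_chain_ge {X Y : Type*} [MetricSpace X] [MetricSpace Y]
    (R : Set (X × Y)) (hR : IsCorrespondence R) {n : ℕ} (hn : 0 < n)
    (r : ℝ) (hr : 0 < r) (p : X) (q : Y) (hpq : (p, q) ∈ R)
    (x : Fin (n + 1) → X) (y : Fin (n + 1) → Y) (hxy : ∀ i, (x i, y i) ∈ R)
    (hchain : ∀ i : Fin n, dist (x i.castSucc) (x i.succ) ≤ r) :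
    ENNReal.ofReal
        ((Finset.univ.inf' ⟨0, Finset.mem_univ 0⟩ fun i : Fin (n + 1) => dist p (x i))
          - r / 2)
      ≤ ENNReal.ofReal
          (Finset.univ.inf' ⟨⟨0, hn⟩, Finset.mem_univ _⟩
            fun i : Fin n => gromovProd q (y i.castSucc) (y i.succ))
        + 2 * corrDis R := by
  by_cases hD : corrDis R = ⊤
  · simp [hD, ENNReal.mul_top]
  set d : ℝ := (corrDis R).toReal with hd
  have hd0 : 0 ≤ d := ENNReal.toReal_nonneg
  set M : ℝ := Finset.univ.inf' ⟨0, Finset.mem_univ 0⟩ fun i : Fin (n + 1) => dist p (x i)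
    with hM
  have key : M - r / 2 ≤ (Finset.univ.inf' ⟨⟨0, hn⟩, Finset.mem_univ _⟩
      fun i : Fin n => gromovProd q (y i.castSucc) (y i.succ)) + 2 * d := by
    rw [← sub_le_iff_le_add]
    apply Finset.le_inf'
    intro i _
    have hMa : M ≤ dist p (x i.castSucc) := Finset.inf'_le _ (Finset.mem_univ _)
    have hMb : M ≤ dist p (x i.succ) := Finset.inf'_le _ (Finset.mem_univ _)
    have h1 := (corrDis_bound R hD hpq (hxy i.castSucc)).1
    have h2 := (corrDis_bound R hD hpq (hxy i.succ)).1
    have h3 := (corrDis_bound R hD (hxy i.castSucc) (hxy i.succ)).2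
    simp only at h1 h2 h3
    have hc := hchain i
    unfold gromovProd
    nlinarith
  calc ENNReal.ofReal (M - r / 2)
      ≤ ENNReal.ofReal ((Finset.univ.inf' ⟨⟨0, hn⟩, Finset.mem_univ _⟩
          fun i : Fin n => gromovProd q (y i.castSucc) (y i.succ)) + 2 * d) :=
        ENNReal.ofReal_le_ofReal key
    _ ≤ ENNReal.ofReal (Finset.univ.inf' ⟨⟨0, hn⟩, Finset.mem_univ _⟩
          fun i : Fin n => gromovProd q (y i.castSucc) (y i.succ))
        + ENNReal.ofReal (2 * d) := ENNReal.ofReal_add_le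
    _ = _ := by
        rw [ENNReal.ofReal_mul (by norm_num), ENNReal.ofReal_ofNat,
          hd, ENNReal.ofReal_toReal hD]
end

section
/- Let X be a compact geodesic metric space with finite first Betti number β₁(X). Then for every r > 0, the first Betti number of the open Vietoris-Rips complex satisfies β₁(VR^r(X)) ≤ β₁(X). Consequently, the first persistence barcode of the open Vietoris-Rips filtration of X has at most β₁(X) intervals, and every interval has left endpoint 0. -/
open scoped unitInterval

/-- A geodesic metric space: any two points are joined by a constant-speed
length-minimizing geodesic. -/
def IsGeodesicSpace (X : Type*) [MetricSpace X] : Prop :=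
  ∀ x y : X, ∃ γ : Path x y, ∀ s t : unitInterval, dist (γ s) (γ t) = |(s : ℝ) - (t : ℝ)| * dist x y

/-- The minimum of `d(p,·)` along a path. -/
noncomputable def pathMin {X : Type*} [MetricSpace X] (p : X) {x x' : X} (γ : Path x x') : ℝ :=
  sInf (Set.range fun t => dist p (γ t))

/-- `m_p(x,x')`: the supremum over continuous paths from `x` to `x'` of the minimum of
`d(p,·)` along the path. -/
noncomputable def mFn {X : Type*} [MetricSpace X] (p x x' : X) : ℝ :=
  sSup {m | ∃ γ : Path x x', m = pathMin p γ}

/-- Ordered 1-boundary map: `∂₁(x,x') = x' - x` extended linearly to 1-chains. -/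
noncomputable def bdry1 (X : Type*) : ((X × X) →₀ ℚ) →ₗ[ℚ] (X →₀ ℚ) :=
  Finsupp.lsum ℚ fun e => LinearMap.toSpanSingleton ℚ (X →₀ ℚ)
    (Finsupp.single e.2 1 - Finsupp.single e.1 1)

/-- Ordered 2-boundary map: `∂₂(x,y,z) = (y,z) - (x,z) + (x,y)` extended linearly. -/
noncomputable def bdry2 (X : Type*) : ((X × X × X) →₀ ℚ) →ₗ[ℚ] ((X × X) →₀ ℚ) :=
  Finsupp.lsum ℚ fun t => LinearMap.toSpanSingleton ℚ ((X × X) →₀ ℚ)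
    (Finsupp.single (t.2.1, t.2.2) 1 - Finsupp.single (t.1, t.2.2) 1
      + Finsupp.single (t.1, t.2.1) 1)

/-- Edges of the open Vietoris–Rips complex `VR^r(X)`. -/
def vrEdges (X : Type*) [MetricSpace X] (r : ℝ) : Set (X × X) :=
  {e | dist e.1 e.2 < r}

/-- (Ordered) triangles of the open Vietoris–Rips complex `VR^r(X)`:
finite subsets of diameter `< r`. -/
def vrTriangles (X : Type*) [MetricSpace X] (r : ℝ) : Set (X × X × X) :=
  {t | dist t.1 t.2.1 < r ∧ dist t.1 t.2.2 < r ∧ dist t.2.1 t.2.2 < r}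

/-- 1-cycles of `VR^r(X)` (ordered simplicial chains). -/
noncomputable def vrCycles (X : Type*) [MetricSpace X] (r : ℝ) :
    Submodule ℚ ((X × X) →₀ ℚ) where
  carrier := {c | ↑c.support ⊆ vrEdges X r ∧ bdry1 X c = 0}
  add_mem' := by
    intro a b ha hb
    classical
    refine ⟨fun e he => ?_, by simp [map_add, ha.2, hb.2]⟩
    rcases Finset.mem_union.1 (Finsupp.support_add he) with h | h
    · exact ha.1 h
    · exact hb.1 h
  zero_mem' := ⟨by simp, by simp⟩
  smul_mem' := by
    intro q a ha
    exact ⟨fun e he => ha.1 (Finsupp.support_smul he), by simp [map_smul, ha.2]⟩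

/-- 1-boundaries of `VR^r(X)`: the span of boundaries of triangles of diameter `< r`. -/
noncomputable def vrBoundaries (X : Type*) [MetricSpace X] (r : ℝ) :
    Submodule ℚ ((X × X) →₀ ℚ) :=
  Submodule.span ℚ {c | ∃ t ∈ vrTriangles X r, c = bdry2 X (Finsupp.single t 1)}

/-- First (ordered) simplicial homology of `VR^r(X)` with `ℚ` coefficients. -/
noncomputable def vrH1 (X : Type*) [MetricSpace X] (r : ℝ) :=
  vrCycles X r ⧸ Submodule.comap (vrCycles X r).subtype (vrBoundaries X r)

noncomputable instance vrH1.addCommGroup (X : Type*) [MetricSpace X] (r : ℝ) :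
    AddCommGroup (vrH1 X r) :=
  inferInstanceAs (AddCommGroup
    (vrCycles X r ⧸ Submodule.comap (vrCycles X r).subtype (vrBoundaries X r)))

noncomputable instance vrH1.module (X : Type*) [MetricSpace X] (r : ℝ) :
    Module ℚ (vrH1 X r) :=
  inferInstanceAs (Module ℚ
    (vrCycles X r ⧸ Submodule.comap (vrCycles X r).subtype (vrBoundaries X r)))

/-- The three faces of the standard 2-simplex, as paths (singular 1-simplices,
parametrized by the unit interval). `sFace i` skips vertex `i`. -/
noncomputable def sFace (i : Fin 3) : C(unitInterval, ↥(stdSimplex ℝ (Fin 3))) where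
  toFun t :=
    ⟨![![(0 : ℝ), 1 - (t : ℝ), (t : ℝ)], ![1 - (t : ℝ), 0, (t : ℝ)],
        ![1 - (t : ℝ), (t : ℝ), 0]] i, by
      constructor
      · intro j
        fin_cases i <;> fin_cases j <;>
          simp [Matrix.cons_val_zero, Matrix.cons_val_one, Matrix.head_cons] <;>
          first
            | exact le_refl _
            | exact t.2.1
            | exact sub_nonneg.2 t.2.2
            | exact t.2.2
      · fin_cases i <;> simp [Fin.sum_univ_three]⟩
  continuous_toFun := by
    refine Continuous.subtype_mk ?_ _
    refine continuous_pi fun j => ?_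
    fin_cases i <;> fin_cases j <;>
      simp [Matrix.cons_val_zero, Matrix.cons_val_one, Matrix.head_cons,
        Matrix.vecHead, Matrix.vecTail, Function.comp] <;>
      fun_prop

/-- Singular 1-boundary: `∂γ = γ(1) - γ(0)`, extended linearly. -/
noncomputable def sbdry1 (X : Type*) [TopologicalSpace X] :
    (C(unitInterval, X) →₀ ℚ) →ₗ[ℚ] (X →₀ ℚ) :=
  Finsupp.lsum ℚ fun γ => LinearMap.toSpanSingleton ℚ (X →₀ ℚ)
    (Finsupp.single (γ 1) 1 - Finsupp.single (γ 0) 1)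

/-- Singular 2-boundary: `∂σ = σ∘d₀ - σ∘d₁ + σ∘d₂`, extended linearly. -/
noncomputable def sbdry2 (X : Type*) [TopologicalSpace X] :
    (C(↥(stdSimplex ℝ (Fin 3)), X) →₀ ℚ) →ₗ[ℚ] (C(unitInterval, X) →₀ ℚ) :=
  Finsupp.lsum ℚ fun sg => LinearMap.toSpanSingleton ℚ (C(unitInterval, X) →₀ ℚ)
    (Finsupp.single (sg.comp (sFace 0)) 1 - Finsupp.single (sg.comp (sFace 1)) 1
      + Finsupp.single (sg.comp (sFace 2)) 1)

/-- First singular homology of `X` with `ℚ` coefficients. -/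
noncomputable def singularH1 (X : Type*) [TopologicalSpace X] :=
  LinearMap.ker (sbdry1 X) ⧸
    Submodule.comap (LinearMap.ker (sbdry1 X)).subtype (LinearMap.range (sbdry2 X))

noncomputable instance singularH1.addCommGroup (X : Type*) [TopologicalSpace X] :
    AddCommGroup (singularH1 X) :=
  inferInstanceAs (AddCommGroup (LinearMap.ker (sbdry1 X) ⧸
    Submodule.comap (LinearMap.ker (sbdry1 X)).subtype (LinearMap.range (sbdry2 X))))

noncomputable instance singularH1.module (X : Type*) [TopologicalSpace X] :
    Module ℚ (singularH1 X) :=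
  inferInstanceAs (Module ℚ (LinearMap.ker (sbdry1 X) ⧸
    Submodule.comap (LinearMap.ker (sbdry1 X)).subtype (LinearMap.range (sbdry2 X))))

/-- The first Betti number of a topological space: the rank of `H₁(X;ℚ)`. -/
noncomputable def firstBetti (X : Type*) [TopologicalSpace X] : Cardinal :=
  Module.rank ℚ (singularH1 X)


/-! ### Auxiliary development -/

section Aux

set_option linter.unusedSectionVars false

open Finsupp

variable {X : Type*} [MetricSpace X]

/-- The `i`-th node of the uniform partition of `[0,1]` into `n` pieces (clamped). -/
noncomputable def pt (n i : ℕ) : unitInterval := Set.projIcc 0 1 zero_le_one ((i : ℝ) / n)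

lemma pt_coe (n i : ℕ) : ((pt n i : ℝ)) = max 0 (min 1 ((i : ℝ) / n)) := rfl

lemma pt_zero (n : ℕ) : pt n 0 = 0 := by
  ext
  simp [pt_coe]

lemma pt_last {n : ℕ} (hn : n ≠ 0) : pt n n = 1 := by
  ext
  have : ((n : ℝ)) / n = 1 := div_self (by exact_mod_cast hn)
  simp [pt_coe, this]

lemma pt_dist (n i j : ℕ) : |(pt n i : ℝ) - (pt n j : ℝ)| ≤ |(i : ℝ) - (j : ℝ)| / n := by
  calc |(pt n i : ℝ) - (pt n j : ℝ)| ≤ |(i:ℝ)/n - (j:ℝ)/n| := by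
        simpa [pt, Subtype.dist_eq, Real.dist_eq] using
          (LipschitzWith.projIcc (zero_le_one (α := ℝ))).dist_le_mul ((i:ℝ)/n) ((j:ℝ)/n)
    _ = |(i:ℝ) - (j:ℝ)| / n := by
        rw [div_sub_div_same, abs_div, abs_of_nonneg (by positivity : (0:ℝ) ≤ (n:ℝ))]

/-- Uniform sample of a path as a 1-chain. -/
noncomputable def sample (n : ℕ) (f : C(unitInterval, X)) : (X × X) →₀ ℚ :=
  ∑ i ∈ Finset.range n, Finsupp.single (f (pt n i), f (pt n (i+1))) 1

lemma bdry1_single (e : X × X) (q : ℚ) :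
    bdry1 X (Finsupp.single e q) =
      q • (Finsupp.single e.2 1 - Finsupp.single e.1 1) := by
  simp [bdry1, Finsupp.lsum_single, LinearMap.toSpanSingleton_apply]

lemma bdry2_single (t : X × X × X) (q : ℚ) :
    bdry2 X (Finsupp.single t q) =
      q • (Finsupp.single (t.2.1, t.2.2) 1 - Finsupp.single (t.1, t.2.2) 1
        + Finsupp.single (t.1, t.2.1) 1) := by
  simp [bdry2, Finsupp.lsum_single, LinearMap.toSpanSingleton_apply]

lemma bdry1_sample (n : ℕ) (f : C(unitInterval, X)) :
    bdry1 X (sample n f) =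
      Finsupp.single (f (pt n n)) 1 - Finsupp.single (f (pt n 0)) 1 := by
  rw [sample, map_sum]
  simp only [bdry1_single, one_smul]
  exact Finset.sum_range_sub (fun i => Finsupp.single (f (pt n i)) (1:ℚ)) n

lemma bdry2_single_mem {r : ℝ} {t : X × X × X} (ht : t ∈ vrTriangles X r) :
    bdry2 X (Finsupp.single t (1:ℚ)) ∈ vrBoundaries X r :=
  Submodule.subset_span ⟨t, ht, rfl⟩

lemma single_diag_mem {r : ℝ} (hr : 0 < r) (x : X) :
    Finsupp.single (x, x) (1:ℚ) ∈ vrBoundaries X r := by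
  have ht : ((x, x, x) : X × X × X) ∈ vrTriangles X r := by
    simp [vrTriangles, hr]
  have h := bdry2_single_mem ht
  rw [bdry2_single] at h
  simpa using h

lemma cone_mem {s : ℝ} (p : ℕ → X) (n : ℕ)
    (hp : ∀ i ≤ n, ∀ j ≤ n, dist (p i) (p j) < s) :
    (∑ i ∈ Finset.range n, Finsupp.single (p i, p (i+1)) (1:ℚ))
      - Finsupp.single (p 0, p n) 1 ∈ vrBoundaries X s := by
  induction n with
  | zero =>
      have hs : (0:ℝ) < s := by simpa using hp 0 (le_refl 0) 0 (le_refl 0)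
      simpa using neg_mem (single_diag_mem hs (p 0))
  | succ n ih =>
      have ih' := ih (fun i hi j hj => hp i (hi.trans (Nat.le_succ n)) j (hj.trans (Nat.le_succ n)))
      have htri : ((p 0, p n, p (n+1)) : X × X × X) ∈ vrTriangles X s :=
        ⟨hp 0 (Nat.zero_le _) n (Nat.le_succ n),
         hp 0 (Nat.zero_le _) (n+1) (le_refl _),
         hp n (Nat.le_succ n) (n+1) (le_refl _)⟩
      have hb := bdry2_single_mem htri
      rw [bdry2_single] at hb
      simp only [one_smul] at hb
      have key : (∑ i ∈ Finset.range (n+1), Finsupp.single (p i, p (i+1)) (1:ℚ))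
          - Finsupp.single (p 0, p (n+1)) 1
          = ((∑ i ∈ Finset.range n, Finsupp.single (p i, p (i+1)) (1:ℚ))
              - Finsupp.single (p 0, p n) 1)
            + (Finsupp.single (p n, p (n+1)) 1 - Finsupp.single (p 0, p (n+1)) 1
              + Finsupp.single (p 0, p n) 1) := by
        rw [Finset.sum_range_succ]; abel
      rw [key]
      exact add_mem ih' hb

/-- `n`-fineness of a path at scale `r`. -/
def Fine (r : ℝ) (n : ℕ) (f : C(unitInterval, X)) : Prop :=
  ∀ s t : unitInterval, |(s : ℝ) - (t : ℝ)| ≤ 1 / n → dist (f s) (f t) < r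

lemma fine_exists {r : ℝ} (hr : 0 < r) (f : C(unitInterval, X)) :
    ∃ n, 0 < n ∧ Fine r n f := by
  have huc : UniformContinuous f := CompactSpace.uniformContinuous_of_continuous f.continuous
  rw [Metric.uniformContinuous_iff] at huc
  obtain ⟨δ, hδ, h⟩ := huc r hr
  obtain ⟨n, hn⟩ := exists_nat_one_div_lt hδ
  refine ⟨n + 1, Nat.succ_pos n, fun s t hst => h ?_⟩
  rw [Subtype.dist_eq, Real.dist_eq]
  refine lt_of_le_of_lt ?_ hn
  exact_mod_cast hst

noncomputable def NN (r : ℝ) (f : C(unitInterval, X)) : ℕ :=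
  @dite _ (∃ n, 0 < n ∧ Fine r n f) (Classical.dec _) (fun h => h.choose) (fun _ => 1)

lemma NN_pos (r : ℝ) (f : C(unitInterval, X)) : 0 < NN r f := by
  rw [NN]
  split
  · next h => exact h.choose_spec.1
  · exact Nat.one_pos

lemma NN_fine {r : ℝ} (hr : 0 < r) (f : C(unitInterval, X)) : Fine r (NN r f) f := by
  rw [NN, dif_pos (fine_exists hr f)]
  exact (fine_exists hr f).choose_spec.2

lemma sample_edge_mem {r : ℝ} {n : ℕ} {f : C(unitInterval, X)} (h : Fine r n f) (i : ℕ) :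
    (f (pt n i), f (pt n (i+1))) ∈ vrEdges X r := by
  refine h _ _ ?_
  refine (pt_dist n i (i+1)).trans ?_
  have h1 : |(i : ℝ) - ((i+1 : ℕ) : ℝ)| = 1 := by push_cast; rw [abs_sub_comm]; simp
  rw [h1]

lemma fine_mono {r : ℝ} {n m : ℕ} {f : C(unitInterval, X)} (h : Fine r n f)
    (hn : 0 < n) (hnm : n ≤ m) : Fine r m f := by
  intro s t hst
  refine h s t (hst.trans ?_)
  apply one_div_le_one_div_of_le
  · exact_mod_cast hn
  · exact_mod_cast hnm

lemma sum_range_mul {M : Type*} [AddCommMonoid M] (g : ℕ → M) (n k : ℕ) :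
    ∑ m ∈ Finset.range (n * k), g m
      = ∑ i ∈ Finset.range n, ∑ j ∈ Finset.range k, g (i * k + j) := by
  induction n with
  | zero => simp
  | succ n ih =>
      rw [Nat.succ_mul, Finset.sum_range_add, ih, Finset.sum_range_succ]

lemma sample_mul_mem {r : ℝ} {n k : ℕ} (f : C(unitInterval, X)) (hn : 0 < n) (hk : 0 < k)
    (hf : Fine r n f) :
    sample n f - sample (n * k) f ∈ vrBoundaries X r := by
  have hknz : (k : ℝ) ≠ 0 := by exact_mod_cast hk.ne'
  have hpt : ∀ i : ℕ, pt (n * k) (i * k) = pt n i := by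
    intro i
    ext
    rw [pt_coe, pt_coe]
    congr 2
    push_cast
    rw [mul_comm (n:ℝ) (k:ℝ), mul_comm (i:ℝ) (k:ℝ), mul_div_mul_left _ _ hknz]
  have hrw : sample (n * k) f
      = ∑ i ∈ Finset.range n, ∑ j ∈ Finset.range k,
          Finsupp.single (f (pt (n*k) (i*k+j)), f (pt (n*k) (i*k+j+1))) (1:ℚ) := by
    rw [sample, sum_range_mul]
  rw [hrw, sample, ← Finset.sum_sub_distrib]
  refine Submodule.sum_mem _ (fun i _ => ?_)
  have hpair : ∀ a ≤ k, ∀ b ≤ k,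
      dist (f (pt (n*k) (i*k+a))) (f (pt (n*k) (i*k+b))) < r := by
    intro a ha b hb
    refine hf _ _ ?_
    refine (pt_dist (n*k) (i*k+a) (i*k+b)).trans ?_
    have habs : |((i*k+a : ℕ) : ℝ) - ((i*k+b : ℕ) : ℝ)| ≤ (k : ℝ) := by
      push_cast
      have h1 : ((i:ℝ)*k + a) - ((i:ℝ)*k + b) = (a:ℝ) - b := by ring
      rw [h1, abs_le]
      have hbk : (b:ℝ) ≤ k := by exact_mod_cast hb
      have hak : (a:ℝ) ≤ k := by exact_mod_cast ha
      have ha0 : (0:ℝ) ≤ a := Nat.cast_nonneg a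
      have hb0 : (0:ℝ) ≤ b := Nat.cast_nonneg b
      constructor <;> linarith
    calc |((i*k+a : ℕ) : ℝ) - ((i*k+b : ℕ) : ℝ)| / ((n*k : ℕ) : ℝ)
        ≤ (k : ℝ) / ((n*k : ℕ):ℝ) := by gcongr
      _ = 1 / n := by
          push_cast
          rw [mul_comm (n:ℝ) (k:ℝ), ← div_div, div_self hknz]
  have hc := cone_mem (X := X) (fun j => f (pt (n*k) (i*k+j))) k hpair
  have h0 : i * k + 0 = i * k := by ring
  have hkk : i * k + k = (i+1) * k := by ring
  rw [h0, hkk, hpt, hpt] at hc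
  have hneg := neg_mem hc
  rw [neg_sub] at hneg
  exact hneg

/-- The 2-chain triangulating the image of a square grid. -/
noncomputable def gridT (F : unitInterval → unitInterval → X) (M : ℕ) : (X × X × X) →₀ ℚ :=
  ∑ i ∈ Finset.range M, ∑ j ∈ Finset.range M,
    (Finsupp.single (F (pt M i) (pt M j), F (pt M (i+1)) (pt M j),
        F (pt M (i+1)) (pt M (j+1))) (1:ℚ)
      - Finsupp.single (F (pt M i) (pt M j), F (pt M i) (pt M (j+1)),
        F (pt M (i+1)) (pt M (j+1))) 1)

lemma grid_bdry (F : unitInterval → unitInterval → X) (M : ℕ) :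
    bdry2 X (gridT F M)
      = (∑ j ∈ Finset.range M,
          Finsupp.single (F (pt M M) (pt M j), F (pt M M) (pt M (j+1))) (1:ℚ))
        - (∑ j ∈ Finset.range M,
          Finsupp.single (F (pt M 0) (pt M j), F (pt M 0) (pt M (j+1))) 1)
        + (∑ i ∈ Finset.range M,
          Finsupp.single (F (pt M i) (pt M 0), F (pt M (i+1)) (pt M 0)) 1)
        - (∑ i ∈ Finset.range M,
          Finsupp.single (F (pt M i) (pt M M), F (pt M (i+1)) (pt M M)) 1) := by
  set V : ℕ → ℕ → ((X × X) →₀ ℚ) :=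
    fun i j => Finsupp.single (F (pt M i) (pt M j), F (pt M i) (pt M (j+1))) 1 with hV
  set H : ℕ → ℕ → ((X × X) →₀ ℚ) :=
    fun i j => Finsupp.single (F (pt M i) (pt M j), F (pt M (i+1)) (pt M j)) 1 with hH
  have hmain : bdry2 X (gridT F M)
      = ∑ i ∈ Finset.range M, ∑ j ∈ Finset.range M,
          ((V (i+1) j - V i j) + (H i j - H i (j+1))) := by
    rw [gridT, map_sum]
    refine Finset.sum_congr rfl fun i _ => ?_
    rw [map_sum]
    refine Finset.sum_congr rfl fun j _ => ?_
    rw [map_sub, bdry2_single, bdry2_single]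
    simp only [one_smul, hV, hH]
    abel
  have h1 : ∀ j, ∑ i ∈ Finset.range M, (V (i+1) j - V i j) = V M j - V 0 j :=
    fun j => Finset.sum_range_sub (fun i => V i j) M
  have h2 : ∀ i, ∑ j ∈ Finset.range M, (H i j - H i (j+1)) = H i 0 - H i M :=
    fun i => Finset.sum_range_sub' (fun j => H i j) M
  calc bdry2 X (gridT F M)
      = ∑ i ∈ Finset.range M, ∑ j ∈ Finset.range M,
          ((V (i+1) j - V i j) + (H i j - H i (j+1))) := hmain
    _ = (∑ i ∈ Finset.range M, ∑ j ∈ Finset.range M, (V (i+1) j - V i j))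
        + (∑ i ∈ Finset.range M, ∑ j ∈ Finset.range M, (H i j - H i (j+1))) := by
        simp only [Finset.sum_add_distrib]
    _ = (∑ j ∈ Finset.range M, ∑ i ∈ Finset.range M, (V (i+1) j - V i j))
        + (∑ i ∈ Finset.range M, ∑ j ∈ Finset.range M, (H i j - H i (j+1))) := by
        rw [Finset.sum_comm]
    _ = (∑ j ∈ Finset.range M, (V M j - V 0 j))
        + (∑ i ∈ Finset.range M, (H i 0 - H i M)) := by
        rw [Finset.sum_congr rfl fun j _ => h1 j, Finset.sum_congr rfl fun i _ => h2 i]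
    _ = _ := by
        simp only [Finset.sum_sub_distrib]
        abel

/-- The join parametrization of the 2-simplex by a square. -/
noncomputable def QQ : C(unitInterval × unitInterval, ↥(stdSimplex ℝ (Fin 3))) where
  toFun p :=
    ⟨![1 - (p.1 : ℝ), (p.1 : ℝ) * (1 - (p.2 : ℝ)), (p.1 : ℝ) * (p.2 : ℝ)], by
      constructor
      · intro j
        fin_cases j
        · simpa using p.1.2.2
        · exact mul_nonneg p.1.2.1 (by simpa using p.2.2.2)
        · exact mul_nonneg p.1.2.1 p.2.2.1
      · simp [Fin.sum_univ_three]; ring⟩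
  continuous_toFun := by
    refine Continuous.subtype_mk ?_ _
    refine continuous_pi fun j => ?_
    fin_cases j <;> simp <;> fun_prop

lemma QQ_one (t : unitInterval) : QQ (1, t) = sFace 0 t := by
  apply Subtype.ext
  funext j
  fin_cases j <;> simp [QQ, sFace]

lemma QQ_s0 (s : unitInterval) : QQ (s, 0) = sFace 2 s := by
  apply Subtype.ext
  funext j
  fin_cases j <;> simp [QQ, sFace]

lemma QQ_s1 (s : unitInterval) : QQ (s, 1) = sFace 1 s := by
  apply Subtype.ext
  funext j
  fin_cases j <;> simp [QQ, sFace]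

lemma QQ_zero (t : unitInterval) : QQ (0, t) = QQ (0, 0) := by
  apply Subtype.ext
  funext j
  fin_cases j <;> simp [QQ]

/-- Sampling chain map from singular 1-chains to Vietoris–Rips 1-chains. -/
noncomputable def Theta (r : ℝ) : (C(unitInterval, X) →₀ ℚ) →ₗ[ℚ] ((X × X) →₀ ℚ) :=
  Finsupp.lsum ℚ fun f => LinearMap.toSpanSingleton ℚ _ (sample (NN r f) f)

lemma Theta_single (r : ℝ) (f : C(unitInterval, X)) (q : ℚ) :
    Theta r (Finsupp.single f q) = q • sample (NN r f) f := by
  simp [Theta, Finsupp.lsum_single, LinearMap.toSpanSingleton_apply]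

lemma sbdry1_single (f : C(unitInterval, X)) (q : ℚ) :
    sbdry1 X (Finsupp.single f q)
      = q • (Finsupp.single (f 1) 1 - Finsupp.single (f 0) 1) := by
  simp [sbdry1, Finsupp.lsum_single, LinearMap.toSpanSingleton_apply]

lemma bdry1_Theta {r : ℝ} (hr : 0 < r) (c : C(unitInterval, X) →₀ ℚ) :
    bdry1 X (Theta r c) = sbdry1 X c := by
  suffices h : (bdry1 X).comp (Theta r) = sbdry1 X by
    have := LinearMap.congr_fun h c
    simpa using this
  refine Finsupp.lhom_ext fun f q => ?_
  rw [LinearMap.comp_apply, Theta_single, map_smul, bdry1_sample,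
    pt_last (NN_pos r f).ne', pt_zero, sbdry1_single]

lemma Theta_support {r : ℝ} (hr : 0 < r) (c : C(unitInterval, X) →₀ ℚ) :
    ↑(Theta r c).support ⊆ vrEdges X r := by
  classical
  induction c using Finsupp.induction_linear with
  | zero => simp
  | add a b ha hb =>
      rw [map_add]
      intro e he
      rcases Finset.mem_union.1 (Finsupp.support_add (Finset.mem_coe.1 he)) with h | h
      · exact ha h
      · exact hb h
  | single f q =>
      rw [Theta_single]
      intro e he
      have he2 := Finsupp.support_smul (Finset.mem_coe.1 he)
      rw [sample] at he2
      have he3 := Finsupp.support_finset_sum he2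
      rcases Finset.mem_biUnion.1 he3 with ⟨i, _, hei⟩
      have he4 := Finsupp.support_single_subset hei
      rw [Finset.mem_singleton] at he4
      rw [he4]
      exact sample_edge_mem (NN_fine hr f) i

/-- A chosen geodesic between two points, as a continuous map. -/
noncomputable def geo (hX : IsGeodesicSpace X) (x y : X) : C(unitInterval, X) :=
  (hX x y).choose.toContinuousMap

lemma geo_dist (hX : IsGeodesicSpace X) (x y : X) (s t : unitInterval) :
    dist (geo hX x y s) (geo hX x y t) = |(s : ℝ) - (t : ℝ)| * dist x y := by
  have := (hX x y).choose_spec s t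
  simpa [geo] using this

lemma geo_zero (hX : IsGeodesicSpace X) (x y : X) : geo hX x y 0 = x := by
  simp [geo]

lemma geo_one (hX : IsGeodesicSpace X) (x y : X) : geo hX x y 1 = y := by
  simp [geo]

/-- Geodesic filling chain map from Vietoris–Rips 1-chains to singular 1-chains. -/
noncomputable def Phi (hX : IsGeodesicSpace X) :
    ((X × X) →₀ ℚ) →ₗ[ℚ] (C(unitInterval, X) →₀ ℚ) :=
  Finsupp.lsum ℚ fun e => LinearMap.toSpanSingleton ℚ _ (Finsupp.single (geo hX e.1 e.2) 1)

lemma Phi_single (hX : IsGeodesicSpace X) (e : X × X) (q : ℚ) :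
    Phi hX (Finsupp.single e q) = q • Finsupp.single (geo hX e.1 e.2) 1 := by
  simp [Phi, Finsupp.lsum_single, LinearMap.toSpanSingleton_apply]

lemma sbdry1_Phi (hX : IsGeodesicSpace X) (c : (X × X) →₀ ℚ) :
    sbdry1 X (Phi hX c) = bdry1 X c := by
  suffices h : (sbdry1 X).comp (Phi hX) = bdry1 X by
    have := LinearMap.congr_fun h c
    simpa using this
  refine Finsupp.lhom_ext fun e q => ?_
  rw [LinearMap.comp_apply, Phi_single, map_smul, bdry1_single]
  congr 1
  rw [sbdry1_single, one_smul, geo_zero, geo_one]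

lemma edge_sub_mem {r s : ℝ} (hX : IsGeodesicSpace X) (hr : 0 < r) (e : X × X)
    (hes : dist e.1 e.2 < s) :
    Finsupp.single e (1:ℚ) - Theta r (Phi hX (Finsupp.single e 1)) ∈ vrBoundaries X s := by
  rw [Phi_single, one_smul, Theta_single, one_smul]
  set g := geo hX e.1 e.2 with hg
  set n := NN r g with hn
  have hpair : ∀ i ≤ n, ∀ j ≤ n, dist (g (pt n i)) (g (pt n j)) < s := by
    intro i _ j _
    rw [hg, geo_dist]
    have h1 : |(pt n i : ℝ) - (pt n j : ℝ)| ≤ 1 := by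
      have hi1 := (pt n i).2.1
      have hi2 := (pt n i).2.2
      have hj1 := (pt n j).2.1
      have hj2 := (pt n j).2.2
      rw [abs_le]
      constructor <;> linarith
    calc |(pt n i : ℝ) - (pt n j : ℝ)| * dist e.1 e.2
        ≤ 1 * dist e.1 e.2 := mul_le_mul_of_nonneg_right h1 dist_nonneg
      _ < s := by rwa [one_mul]
  have hc := cone_mem (fun i => g (pt n i)) n hpair
  rw [pt_zero, pt_last (by rw [hn]; exact (NN_pos r g).ne' : n ≠ 0), hg, geo_zero, geo_one] at hc
  have hneg := neg_mem hc
  rw [neg_sub] at hneg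
  simpa [sample] using hneg

lemma chain_sub_mem {r s : ℝ} (hX : IsGeodesicSpace X) (hr : 0 < r) (z : (X × X) →₀ ℚ)
    (hz : ↑z.support ⊆ vrEdges X s) :
    z - Theta r (Phi hX z) ∈ vrBoundaries X s := by
  have hz1 : z = ∑ e ∈ z.support, Finsupp.single e (z e) :=
    (Finsupp.sum_single z).symm
  have hrep : z - Theta r (Phi hX z)
      = ∑ e ∈ z.support,
          (z e) • (Finsupp.single e (1:ℚ) - Theta r (Phi hX (Finsupp.single e 1))) := by
    conv_lhs => rw [hz1]
    rw [map_sum, map_sum, ← Finset.sum_sub_distrib]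
    refine Finset.sum_congr rfl fun e _ => ?_
    have hsm : Finsupp.single e (z e) = (z e) • Finsupp.single e (1:ℚ) := by
      rw [Finsupp.smul_single' (z e) e 1, mul_one]
    simp only [hsm, map_smul, smul_sub]
  rw [hrep]
  exact Submodule.sum_mem _ fun e he =>
    Submodule.smul_mem _ _ (edge_sub_mem hX hr e (hz (Finset.mem_coe.2 he)))

lemma sbdry2_single (sg : C(↥(stdSimplex ℝ (Fin 3)), X)) (q : ℚ) :
    sbdry2 X (Finsupp.single sg q)
      = q • (Finsupp.single (sg.comp (sFace 0)) 1 - Finsupp.single (sg.comp (sFace 1)) 1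
          + Finsupp.single (sg.comp (sFace 2)) 1) := by
  simp [sbdry2, Finsupp.lsum_single, LinearMap.toSpanSingleton_apply]

lemma lemmaA {r : ℝ} (hr : 0 < r) (sg2 : C(↥(stdSimplex ℝ (Fin 3)), X)) :
    Theta r (sbdry2 X (Finsupp.single sg2 (1:ℚ))) ∈ vrBoundaries X r := by
  rw [sbdry2_single, one_smul, map_add, map_sub, Theta_single, Theta_single, Theta_single,
    one_smul, one_smul, one_smul]
  set γ0 := sg2.comp (sFace 0) with hγ0
  set γ1 := sg2.comp (sFace 1) with hγ1
  set γ2 := sg2.comp (sFace 2) with hγ2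
  set n0 := NN r γ0 with hn0
  set n1 := NN r γ1 with hn1
  set n2 := NN r γ2 with hn2
  -- the square-parametrized filling
  set G : C(unitInterval × unitInterval, X) := sg2.comp QQ with hG
  obtain ⟨K, hK0, hK⟩ : ∃ K : ℕ, 0 < K ∧
      ∀ p q : unitInterval × unitInterval, dist p q ≤ 1 / K → dist (G p) (G q) < r := by
    have huc : UniformContinuous G := CompactSpace.uniformContinuous_of_continuous G.continuous
    rw [Metric.uniformContinuous_iff] at huc
    obtain ⟨δ, hδ, h⟩ := huc r hr
    obtain ⟨n, hn⟩ := exists_nat_one_div_lt hδ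
    refine ⟨n + 1, Nat.succ_pos n, fun p q hpq => h (lt_of_le_of_lt ?_ hn)⟩
    exact_mod_cast hpq
  set M := n0 * n1 * n2 * K with hM
  have hM0 : 0 < M := by
    have := NN_pos r γ0; have := NN_pos r γ1; have := NN_pos r γ2
    positivity
  have hA0 : sample n0 γ0 - sample M γ0 ∈ vrBoundaries X r := by
    have hMe : M = n0 * (n1 * n2 * K) := by rw [hM]; ring
    rw [hMe]
    exact sample_mul_mem γ0 (NN_pos r γ0) (mul_pos (mul_pos (NN_pos r γ1) (NN_pos r γ2)) hK0) (NN_fine hr γ0)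
  have hA1 : sample n1 γ1 - sample M γ1 ∈ vrBoundaries X r := by
    have hMe : M = n1 * (n0 * n2 * K) := by rw [hM]; ring
    rw [hMe]
    exact sample_mul_mem γ1 (NN_pos r γ1) (mul_pos (mul_pos (NN_pos r γ0) (NN_pos r γ2)) hK0) (NN_fine hr γ1)
  have hA2 : sample n2 γ2 - sample M γ2 ∈ vrBoundaries X r := by
    have hMe : M = n2 * (n0 * n1 * K) := by rw [hM]; ring
    rw [hMe]
    exact sample_mul_mem γ2 (NN_pos r γ2) (mul_pos (mul_pos (NN_pos r γ0) (NN_pos r γ1)) hK0) (NN_fine hr γ2)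
  set F : unitInterval → unitInterval → X := fun u v => G (u, v) with hF
  have hKM : (1 : ℝ) / M ≤ 1 / K := by
    apply one_div_le_one_div_of_le
    · exact_mod_cast hK0
    · exact_mod_cast Nat.le_of_dvd hM0 ⟨n0 * n1 * n2, by rw [hM]; ring⟩
  have hFd : ∀ i j i' j' : ℕ, i' ≤ i + 1 → i ≤ i' + 1 → j' ≤ j + 1 → j ≤ j' + 1 →
      dist (F (pt M i) (pt M j)) (F (pt M i') (pt M j')) < r := by
    intro i j i' j' h1 h2 h3 h4
    refine hK _ _ ?_
    rw [Prod.dist_eq]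
    have hone : ∀ a b : ℕ, a ≤ b + 1 → b ≤ a + 1 → |(a:ℝ) - (b:ℝ)| ≤ 1 := by
      intro a b hab hba
      have hab' : (a:ℝ) ≤ (b:ℝ) + 1 := by exact_mod_cast hab
      have hba' : (b:ℝ) ≤ (a:ℝ) + 1 := by exact_mod_cast hba
      rw [abs_le]; constructor <;> linarith
    have hcoord : ∀ a b : ℕ, a ≤ b + 1 → b ≤ a + 1 →
        dist (pt M a) (pt M b) ≤ 1 / M := by
      intro a b hab hba
      rw [Subtype.dist_eq, Real.dist_eq]
      refine (pt_dist M a b).trans ?_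
      have := hone a b hab hba
      calc |(a:ℝ) - (b:ℝ)| / M ≤ 1 / M := by gcongr
        _ = 1 / M := rfl
    refine (max_le (hcoord i i' h2 h1) (hcoord j j' h4 h3)).trans hKM
  have hTri : bdry2 X (gridT F M) ∈ vrBoundaries X r := by
    rw [gridT, map_sum]
    refine Submodule.sum_mem _ fun i _ => ?_
    rw [map_sum]
    refine Submodule.sum_mem _ fun j _ => ?_
    rw [map_sub]
    refine sub_mem (bdry2_single_mem ?_) (bdry2_single_mem ?_)
    · exact ⟨hFd i j (i+1) j (by omega) (by omega) (by omega) (by omega),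
        hFd i j (i+1) (j+1) (by omega) (by omega) (by omega) (by omega),
        hFd (i+1) j (i+1) (j+1) (by omega) (by omega) (by omega) (by omega)⟩
    · exact ⟨hFd i j i (j+1) (by omega) (by omega) (by omega) (by omega),
        hFd i j (i+1) (j+1) (by omega) (by omega) (by omega) (by omega),
        hFd i (j+1) (i+1) (j+1) (by omega) (by omega) (by omega) (by omega)⟩
  have hFapp : ∀ u v : unitInterval, F u v = sg2 (QQ (u, v)) := fun u v => rfl
  have claim0 : ∑ j ∈ Finset.range M,
      Finsupp.single (F (pt M M) (pt M j), F (pt M M) (pt M (j+1))) (1:ℚ) = sample M γ0 := by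
    rw [sample]
    refine Finset.sum_congr rfl fun j _ => ?_
    have h1 : ∀ v : unitInterval, F (pt M M) v = γ0 v := by
      intro v
      rw [hFapp, pt_last hM0.ne', QQ_one]
      rfl
    rw [h1, h1]
  have claim1 : ∑ i ∈ Finset.range M,
      Finsupp.single (F (pt M i) (pt M M), F (pt M (i+1)) (pt M M)) (1:ℚ) = sample M γ1 := by
    rw [sample]
    refine Finset.sum_congr rfl fun i _ => ?_
    have h1 : ∀ u : unitInterval, F u (pt M M) = γ1 u := by
      intro u
      rw [hFapp, pt_last hM0.ne', QQ_s1]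
      rfl
    rw [h1, h1]
  have claim2 : ∑ i ∈ Finset.range M,
      Finsupp.single (F (pt M i) (pt M 0), F (pt M (i+1)) (pt M 0)) (1:ℚ) = sample M γ2 := by
    rw [sample]
    refine Finset.sum_congr rfl fun i _ => ?_
    have h1 : ∀ u : unitInterval, F u (pt M 0) = γ2 u := by
      intro u
      rw [hFapp, pt_zero, QQ_s0]
      rfl
    rw [h1, h1]
  have claimv : ∑ j ∈ Finset.range M,
      Finsupp.single (F (pt M 0) (pt M j), F (pt M 0) (pt M (j+1))) (1:ℚ)
        ∈ vrBoundaries X r := by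
    refine Submodule.sum_mem _ fun j _ => ?_
    have h1 : ∀ v : unitInterval, F (pt M 0) v = sg2 (QQ (0, 0)) := by
      intro v
      rw [hFapp, pt_zero, QQ_zero]
    rw [h1, h1]
    exact single_diag_mem hr _
  have hkey : sample M γ0 - sample M γ1 + sample M γ2 ∈ vrBoundaries X r := by
    have heq : sample M γ0 - sample M γ1 + sample M γ2
        = bdry2 X (gridT F M)
          + ∑ j ∈ Finset.range M,
              Finsupp.single (F (pt M 0) (pt M j), F (pt M 0) (pt M (j+1))) (1:ℚ) := by
      rw [grid_bdry F M, claim0, claim1, claim2]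
      abel
    rw [heq]
    exact add_mem hTri claimv
  have hsplit : sample n0 γ0 - sample n1 γ1 + sample n2 γ2
      = (sample n0 γ0 - sample M γ0) - (sample n1 γ1 - sample M γ1)
        + (sample n2 γ2 - sample M γ2)
        + (sample M γ0 - sample M γ1 + sample M γ2) := by abel
  rw [hsplit]
  exact add_mem (add_mem (sub_mem hA0 hA1) hA2) hkey

lemma Theta_sbdry2_mem {r : ℝ} (hr : 0 < r) (c : C(↥(stdSimplex ℝ (Fin 3)), X) →₀ ℚ) :
    Theta r (sbdry2 X c) ∈ vrBoundaries X r := by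
  induction c using Finsupp.induction_linear with
  | zero => simp only [map_zero]; exact zero_mem _
  | add a b ha hb => rw [map_add, map_add]; exact add_mem ha hb
  | single sg2 q =>
      have hsm : Finsupp.single sg2 q = q • Finsupp.single sg2 (1:ℚ) := by
        rw [Finsupp.smul_single' q sg2 1, mul_one]
      rw [hsm, map_smul, map_smul]
      exact Submodule.smul_mem _ _ (lemmaA hr sg2)

end Aux

/-- for a compact geodesic space `X` with finite first Betti number,
`β₁(VR^r(X)) ≤ β₁(X)` for every `r > 0`. Consequently the first persistence barcode of
the open Vietoris–Rips filtration has at most `β₁(X)` intervals — expressed by the same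
uniform rank bound — and every interval has left endpoint `0` — expressed by the
surjectivity of all the maps `H₁(VR^r(X)) → H₁(VR^s(X))`, `0 < r < s`. -/
theorem vr_betti_le_betti {X : Type*} [MetricSpace X] [CompactSpace X]
    (hX : IsGeodesicSpace X) (hfin : firstBetti X < Cardinal.aleph0) :
    (∀ r : ℝ, 0 < r → Module.rank ℚ (vrH1 X r) ≤ firstBetti X) ∧
    (∀ r s : ℝ, 0 < r → r < s →
      ∀ c : (X × X) →₀ ℚ, c ∈ vrCycles X s →
        ∃ c' ∈ vrCycles X r, c - c' ∈ vrBoundaries X s) := by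
  constructor
  · intro r hr
    have hθmem : ∀ c : LinearMap.ker (sbdry1 X),
        Theta r (c : C(unitInterval, X) →₀ ℚ) ∈ vrCycles X r := fun c =>
      ⟨Theta_support hr _, by rw [bdry1_Theta hr]; exact c.2⟩
    let θZ : LinearMap.ker (sbdry1 X) →ₗ[ℚ] vrCycles X r :=
      LinearMap.codRestrict (vrCycles X r)
        ((Theta r).comp (LinearMap.ker (sbdry1 X)).subtype) hθmem
    have hmap : Submodule.comap (LinearMap.ker (sbdry1 X)).subtype (LinearMap.range (sbdry2 X))
        ≤ Submodule.comap θZ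
            (Submodule.comap (vrCycles X r).subtype (vrBoundaries X r)) := by
      intro c hc
      obtain ⟨w, hw⟩ := hc
      simp only [Submodule.mem_comap]
      show (θZ c : (X × X) →₀ ℚ) ∈ vrBoundaries X r
      have h1 : (θZ c : (X × X) →₀ ℚ) = Theta r (c : C(unitInterval, X) →₀ ℚ) := rfl
      have hw' : sbdry2 X w = (c : C(unitInterval, X) →₀ ℚ) := hw
      rw [h1, ← hw']
      exact Theta_sbdry2_mem hr w
    let θbar : singularH1 X →ₗ[ℚ] vrH1 X r := Submodule.mapQ _ _ θZ hmap
    have hsurj : Function.Surjective θbar := by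
      intro y
      obtain ⟨z, rfl⟩ := Submodule.Quotient.mk_surjective _ y
      have hker : Phi hX (z : (X × X) →₀ ℚ) ∈ LinearMap.ker (sbdry1 X) := by
        rw [LinearMap.mem_ker, sbdry1_Phi]
        exact z.2.2
      refine ⟨Submodule.Quotient.mk ⟨Phi hX (z : (X × X) →₀ ℚ), hker⟩, ?_⟩
      show Submodule.mapQ _ _ θZ hmap (Submodule.Quotient.mk _) = _
      rw [Submodule.mapQ_apply, Submodule.Quotient.eq]
      simp only [Submodule.mem_comap]
      have h2 : ((θZ ⟨Phi hX (z : (X × X) →₀ ℚ), hker⟩ - z : vrCycles X r) : (X × X) →₀ ℚ)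
          = Theta r (Phi hX (z : (X × X) →₀ ℚ)) - (z : (X × X) →₀ ℚ) := rfl
      show ((θZ ⟨Phi hX (z : (X × X) →₀ ℚ), hker⟩ - z : vrCycles X r) : (X × X) →₀ ℚ)
        ∈ vrBoundaries X r
      rw [h2]
      have h3 := chain_sub_mem hX hr (z : (X × X) →₀ ℚ) z.2.1
      have h4 := neg_mem h3
      rwa [neg_sub] at h4
    exact LinearMap.rank_le_of_surjective θbar hsurj
  · intro r s hr _ c hc
    refine ⟨Theta r (Phi hX c), ⟨Theta_support hr _, ?_⟩, ?_⟩
    · rw [bdry1_Theta hr, sbdry1_Phi]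
      exact hc.2
    · exact chain_sub_mem hX hr c hc.1
end
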